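/- Let S be a unilateral weighted shift with positive bounded weights. For every non-zero x = Σ a_n e_n ∈ H, r₃(S) ≤ r_S(x) ≤ r(S), where r₃(S) = limsup β_n^{1/n} and r_S(x) = limsup ‖Sⁿx‖^{1/n} is the local spectral radius. -/

import Mathlib

/-!
Let `β n = ω 0 ⋯ ω (n-1)`. If the coefficient `a_k` of `x` is non-zero, the `(n+k)`-th
coefficient of `Sⁿ x` is `a_k β (n+k) / β k`, so `β (n+k) ≤ (β k / |a_k|) ‖Sⁿ x‖`; a fixed shift
of the index and a fixed positive factor do not change the `limsup` of `n`-th roots. The upper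
bound is `‖Sⁿ x‖ ≤ ‖Sⁿ‖ ‖x‖` together with Gelfand's formula.
-/

open Filter Topology

lemma tendsto_const_rpow_inv_natCast {c : ℝ} (hc : 0 < c) :
    Tendsto (fun n : ℕ => c ^ (n : ℝ)⁻¹) atTop (𝓝 1) := by
  simpa [Function.comp_def] using (Real.continuousAt_const_rpow hc.ne').tendsto.comp
    (tendsto_inv_atTop_nhds_zero_nat (𝕜 := ℝ))

section RootLimsup

variable {f g : ℕ → ℝ}

lemma eventually_le_pow_of_limsup_rpow_inv_lt (hg : ∀ n, 0 ≤ g n)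
    (hb : IsBoundedUnder (· ≤ ·) atTop fun n : ℕ => g n ^ (n : ℝ)⁻¹) {r : ℝ}
    (hr : atTop.limsup (fun n : ℕ => g n ^ (n : ℝ)⁻¹) < r) : ∀ᶠ n in atTop, g n ≤ r ^ n := by
  filter_upwards [eventually_lt_of_limsup_lt hr hb, eventually_ne_atTop 0] with n hn hn0
  rw [← Real.rpow_inv_natCast_pow (hg n) hn0]
  exact pow_le_pow_left₀ (Real.rpow_nonneg (hg n) _) hn.le n

lemma limsup_rpow_inv_le_of_eventually_le_mul_pow (hf : ∀ n, 0 ≤ f n) {K r : ℝ} (hK : 0 < K)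
    (hr : 0 ≤ r) (h : ∀ᶠ n in atTop, f n ≤ K * r ^ n) :
    atTop.limsup (fun n : ℕ => f n ^ (n : ℝ)⁻¹) ≤ r := by
  have hlim : Tendsto (fun n : ℕ => K ^ (n : ℝ)⁻¹ * r) atTop (𝓝 r) := by
    simpa using (tendsto_const_rpow_inv_natCast hK).mul_const r
  refine (limsup_le_limsup ?_
    (isCoboundedUnder_le_of_le atTop fun n => Real.rpow_nonneg (hf n) _)
    hlim.isBoundedUnder_le).trans hlim.limsup_eq.le
  filter_upwards [h, eventually_ne_atTop 0] with n hn hn0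
  calc f n ^ (n : ℝ)⁻¹ ≤ (K * r ^ n) ^ (n : ℝ)⁻¹ := Real.rpow_le_rpow (hf n) hn (by positivity)
    _ = K ^ (n : ℝ)⁻¹ * r := by
      rw [Real.mul_rpow hK.le (by positivity), Real.pow_rpow_inv_natCast hr hn0]

lemma limsup_rpow_inv_le_of_shift_le_mul (hf : ∀ n, 0 ≤ f n) (hg : ∀ n, 0 ≤ g n)
    (hb : IsBoundedUnder (· ≤ ·) atTop fun n : ℕ => g n ^ (n : ℝ)⁻¹) {k : ℕ} {K : ℝ}
    (hK : 0 < K) (h : ∀ n, f (n + k) ≤ K * g n) :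
    atTop.limsup (fun n : ℕ => f n ^ (n : ℝ)⁻¹) ≤ atTop.limsup (fun n : ℕ => g n ^ (n : ℝ)⁻¹) := by
  set R := atTop.limsup fun n : ℕ => g n ^ (n : ℝ)⁻¹
  have hR : 0 ≤ R :=
    le_limsup_of_frequently_le (Frequently.of_forall fun n => Real.rpow_nonneg (hg n) _) hb
  refine le_of_forall_pos_le_add fun ε hε => ?_
  have hRε : 0 < R + ε := by linarith
  have hg_le := eventually_le_pow_of_limsup_rpow_inv_lt hg hb (lt_add_of_pos_right R hε)
  refine limsup_rpow_inv_le_of_eventually_le_mul_pow hf (K := K / (R + ε) ^ k) (by positivity)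
    hRε.le ?_
  filter_upwards [(tendsto_sub_atTop_nat k).eventually hg_le, eventually_ge_atTop k] with m hm hkm
  obtain ⟨n, rfl⟩ := Nat.exists_eq_add_of_le' hkm
  rw [Nat.add_sub_cancel] at hm
  calc f (n + k) ≤ K * g n := h n
    _ ≤ K * (R + ε) ^ n := by gcongr
    _ = K / (R + ε) ^ k * (R + ε) ^ (n + k) := by field_simp; ring

end RootLimsup

lemma tendsto_norm_pow_rpow_inv_toReal_spectralRadius {A : Type*} [NormedRing A]
    [NormedAlgebra ℂ A] [CompleteSpace A] [NormOneClass A] (a : A) :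
    Tendsto (fun n : ℕ => ‖a ^ n‖ ^ (n : ℝ)⁻¹) atTop (𝓝 (spectralRadius ℂ a).toReal) := by
  have hfin : spectralRadius ℂ a ≠ ⊤ :=
    ((spectrum.spectralRadius_le_nnnorm a).trans_lt ENNReal.coe_lt_top).ne
  refine ((ENNReal.tendsto_toReal hfin).comp
    (spectrum.pow_nnnorm_pow_one_div_tendsto_nhds_spectralRadius a)).congr fun n => ?_
  simp [← ENNReal.toReal_rpow, one_div]

section LocalSpectralRadius

variable {E : Type*} [NormedAddCommGroup E] [NormedSpace ℂ E] (T : E →L[ℂ] E)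

lemma norm_pow_apply_rpow_inv_le (x : E) (n : ℕ) :
    ‖(T ^ n) x‖ ^ (n : ℝ)⁻¹ ≤ ‖T ^ n‖ ^ (n : ℝ)⁻¹ * ‖x‖ ^ (n : ℝ)⁻¹ := by
  rw [← Real.mul_rpow (norm_nonneg _) (norm_nonneg _)]
  exact Real.rpow_le_rpow (norm_nonneg _) ((T ^ n).le_opNorm x) (by positivity)

variable [CompleteSpace E] {x : E}

lemma tendsto_norm_pow_rpow_inv_mul_norm_rpow_inv (hx : x ≠ 0) :
    Tendsto (fun n : ℕ => ‖T ^ n‖ ^ (n : ℝ)⁻¹ * ‖x‖ ^ (n : ℝ)⁻¹) atTop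
      (𝓝 (spectralRadius ℂ T).toReal) := by
  have : Nontrivial E := nontrivial_of_ne x 0 hx
  simpa using (tendsto_norm_pow_rpow_inv_toReal_spectralRadius T).mul
    (tendsto_const_rpow_inv_natCast (norm_pos_iff.mpr hx))

lemma isBoundedUnder_norm_pow_apply_rpow_inv (hx : x ≠ 0) :
    IsBoundedUnder (· ≤ ·) atTop fun n : ℕ => ‖(T ^ n) x‖ ^ (n : ℝ)⁻¹ :=
  (tendsto_norm_pow_rpow_inv_mul_norm_rpow_inv T hx).isBoundedUnder_le.mono_le
    (Eventually.of_forall (norm_pow_apply_rpow_inv_le T x))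

lemma limsup_norm_pow_apply_rpow_inv_le_spectralRadius (hx : x ≠ 0) :
    atTop.limsup (fun n : ℕ => ‖(T ^ n) x‖ ^ (n : ℝ)⁻¹) ≤ (spectralRadius ℂ T).toReal := by
  have hlim := tendsto_norm_pow_rpow_inv_mul_norm_rpow_inv T hx
  exact (limsup_le_limsup (Eventually.of_forall (norm_pow_apply_rpow_inv_le T x))
    (isCoboundedUnder_le_of_le atTop fun n => by positivity) hlim.isBoundedUnder_le).trans
    hlim.limsup_eq.le

end LocalSpectralRadius

section WeightedShift

variable {𝕜 E : Type*} [RCLike 𝕜] [NormedAddCommGroup E] [InnerProductSpace 𝕜 E]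

lemma HilbertBasis.exists_repr_ne_zero {ι : Type*} (e : HilbertBasis ι 𝕜 E) {x : E} (hx : x ≠ 0) :
    ∃ k, e.repr x k ≠ 0 := by
  by_contra! h
  exact hx (e.repr.map_eq_zero_iff.1 (lp.ext (funext h)))

def IsWeightedShift (e : HilbertBasis ℕ 𝕜 E) (ω : ℕ → 𝕜) (S : E →L[𝕜] E) : Prop :=
  ∀ n, S (e n) = ω n • e (n + 1)

namespace IsWeightedShift

variable {e : HilbertBasis ℕ 𝕜 E} {ω : ℕ → 𝕜} {S : E →L[𝕜] E}

lemma repr_apply_succ (hS : IsWeightedShift e ω S) (y : E) (k : ℕ) :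
    e.repr (S y) (k + 1) = ω k * e.repr y k := by
  rw [e.repr_apply_apply, e.repr_apply_apply]
  suffices (innerSL 𝕜 (e (k + 1))).comp S = ω k • innerSL 𝕜 (e k) from
    DFunLike.congr_fun this y
  refine ContinuousLinearMap.ext_on
    (Submodule.dense_iff_topologicalClosure_eq_top.2 e.dense_span) ?_
  rintro _ ⟨n, rfl⟩
  by_cases hn : n = k
  · subst hn
    simp [hS n, e.orthonormal.1]
  · simp [hS n, orthonormal_iff_ite.mp e.orthonormal, Ne.symm hn]

lemma repr_pow_apply_add (hS : IsWeightedShift e ω S) (y : E) (k n : ℕ) :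
    e.repr ((S ^ n) y) (n + k) = (∏ i ∈ Finset.Ico k (n + k), ω i) * e.repr y k := by
  induction n with
  | zero => simp
  | succ n ih =>
    rw [pow_succ', mul_apply_eq_comp, Nat.add_right_comm, hS.repr_apply_succ, ih,
      Finset.prod_Ico_succ_top (Nat.le_add_left k n)]
    ring

lemma norm_repr_mul_prod_le (hS : IsWeightedShift e ω S) (y : E) (k n : ℕ) :
    ‖e.repr y k‖ * ∏ i ∈ Finset.Ico k (n + k), ‖ω i‖ ≤ ‖(S ^ n) y‖ :=
  calc ‖e.repr y k‖ * ∏ i ∈ Finset.Ico k (n + k), ‖ω i‖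
      = ‖e.repr ((S ^ n) y) (n + k)‖ := by
        rw [hS.repr_pow_apply_add, norm_mul, norm_prod, mul_comm]
    _ ≤ ‖e.repr ((S ^ n) y)‖ := lp.norm_apply_le_norm two_ne_zero _ _
    _ = ‖(S ^ n) y‖ := e.repr.norm_map _

end IsWeightedShift

end WeightedShift

variable {H : Type*} [NormedAddCommGroup H] [InnerProductSpace ℂ H] [CompleteSpace H]

theorem localSpectralRadius_bounds_general (S : H →L[ℂ] H)
    (e : HilbertBasis ℕ ℂ H) (ω : ℕ → ℝ) (hpos : ∀ n, 0 < ω n)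
    (hS : ∀ n, S (e n) = (ω n : ℂ) • e (n + 1))
    (x : H) (hx : x ≠ 0) :
    (atTop.limsup fun n : ℕ => (∏ i ∈ Finset.range n, ω i) ^ ((n : ℝ)⁻¹)) ≤
        (atTop.limsup fun n : ℕ => ‖(S ^ n) x‖ ^ ((n : ℝ)⁻¹)) ∧
      (atTop.limsup fun n : ℕ => ‖(S ^ n) x‖ ^ ((n : ℝ)⁻¹)) ≤
        (spectralRadius ℂ S).toReal := by
  have hshift : IsWeightedShift e (fun n => (ω n : ℂ)) S := hS
  have hnorm : ∀ i, ‖(ω i : ℂ)‖ = ω i := fun i => by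
    rw [Complex.norm_real, Real.norm_of_nonneg (hpos i).le]
  obtain ⟨k, hk⟩ := e.exists_repr_ne_zero hx
  have hc : 0 < ‖e.repr x k‖ := norm_pos_iff.2 hk
  have hβk : 0 < ∏ i ∈ Finset.range k, ω i := Finset.prod_pos fun i _ => hpos i
  have hβ_shift : ∀ n, ∏ i ∈ Finset.range (n + k), ω i ≤
      (∏ i ∈ Finset.range k, ω i) / ‖e.repr x k‖ * ‖(S ^ n) x‖ := fun n => by
    have h := hshift.norm_repr_mul_prod_le x k n
    simp only [hnorm] at h
    rw [← Finset.prod_range_mul_prod_Ico ω (Nat.le_add_left k n), div_mul_eq_mul_div,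
      mul_div_assoc]
    gcongr
    rwa [le_div_iff₀' hc]
  exact ⟨limsup_rpow_inv_le_of_shift_le_mul
      (fun n => Finset.prod_nonneg fun i _ => (hpos i).le) (fun n => norm_nonneg _)
      (isBoundedUnder_norm_pow_apply_rpow_inv S hx) (div_pos hβk hc) hβ_shift,
    limsup_norm_pow_apply_rpow_inv_le_spectralRadius S hx⟩

/-- For a unilateral weighted shift `S` with positive bounded weights, and every non-zero
`x`, we have `r₃(S) ≤ r_S(x) ≤ r(S)`, where `r₃(S) = limsup (β n)^(1/n)` and
`r_S(x) = limsup ‖Sⁿ x‖^(1/n)` is the local spectral radius. -/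
theorem localSpectralRadius_bounds (S : H →L[ℂ] H)
    (e : HilbertBasis ℕ ℂ H) (ω : ℕ → ℝ) (hpos : ∀ n, 0 < ω n)
    (hbd : ∃ M : ℝ, ∀ n, ω n ≤ M)
    (hS : ∀ n, S (e n) = (ω n : ℂ) • e (n + 1))
    (x : H) (hx : x ≠ 0) :
    (atTop.limsup fun n : ℕ => (∏ i ∈ Finset.range n, ω i) ^ ((n : ℝ)⁻¹)) ≤
        (atTop.limsup fun n : ℕ => ‖(S ^ n) x‖ ^ ((n : ℝ)⁻¹)) ∧
      (atTop.limsup fun n : ℕ => ‖(S ^ n) x‖ ^ ((n : ℝ)⁻¹)) ≤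
        (spectralRadius ℂ S).toReal :=
  localSpectralRadius_bounds_general S e ω hpos hS x hx
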